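/- In any FNHT, for any two distinct nodes v ≠ v' of 𝒯 where neither is a prefix of the other, the state sets l_s(v) and l_s(v') are disjoint. -/
import Mathlib


open Classical

/-- Nodes: finite sequences over `ℕ ∪ {𝔰}`; `none` denotes the stepchild symbol `𝔰`. -/
abbrev FNHTNode := List (Option ℕ)

/-- A node is a stepchild if it is the root or ends in `𝔰`. -/
def isStep (v : FNHTNode) : Prop := v = [] ∨ ∃ w : FNHTNode, v = w ++ [none]

/-- A node is a natural child if it ends in a natural number. -/
def isNat (v : FNHTNode) : Prop := ∃ (w : FNHTNode) (c : ℕ), v = w ++ [some c]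

/-- Flattened nested history trees over a finite state set `Q` with maximal priority `π`
(maximal even priority `πe = π` if `π` is even, else `π - 1`). -/
structure FNHT (Q : Type) [Fintype Q] [DecidableEq Q] (π : ℕ) where
  /-- the ordered tree -/
  T : Finset FNHTNode
  /-- states of a node -/
  ls : FNHTNode → Finset Q
  /-- pure states of a node -/
  lp : FNHTNode → Finset Q
  /-- recurrent states of a node -/
  lr : FNHTNode → Finset Q
  root_mem : [] ∈ T
  prefix_closed : ∀ v w : FNHTNode, v <+: w → w ∈ T → v ∈ T
  order_closed : ∀ (v : FNHTNode) (c c' : ℕ), c < c' → v ++ [some c'] ∈ T →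
    v ++ [some c] ∈ T
  /-- stepchildren have only natural children -/
  step_children : ∀ v ∈ T, ∀ x, isStep v → v ++ [x] ∈ T → x ≠ none
  /-- natural children have only stepchildren -/
  nat_children : ∀ v ∈ T, ∀ x, isNat v → v ++ [x] ∈ T → x = none
  /-- only natural children and, when `π` is odd, the root may be leaves -/
  leaf_constraint : ∀ v ∈ T, isStep v → (v = [] → Even π → ∃ x, v ++ [x] ∈ T) ∧
    (v ≠ [] → ∃ x, v ++ [x] ∈ T)
  ls_nonempty : ∀ v ∈ T, (ls v).Nonempty
  lp_step : ∀ v ∈ T, isStep v → lp v = ∅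
  step_union : ∀ v ∈ T, isStep v →
    ls v = lr v ∪ (T.filter (fun w => ∃ c : ℕ, w = v ++ [some c])).biUnion ls
  step_disj_children : ∀ v ∈ T, isStep v → ∀ c c' : ℕ, c ≠ c' →
    v ++ [some c] ∈ T → v ++ [some c'] ∈ T →
    Disjoint (ls (v ++ [some c])) (ls (v ++ [some c']))
  step_disj_lr : ∀ v ∈ T, isStep v → ∀ c : ℕ, v ++ [some c] ∈ T →
    Disjoint (lr v) (ls (v ++ [some c]))
  nat_lp_nonempty : ∀ v ∈ T, isNat v → (lp v).Nonempty
  nat_union : ∀ v ∈ T, isNat v → ls v = lp v ∪ lr v ∧ Disjoint (lp v) (lr v)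
  nat_stepchild : ∀ v ∈ T, isNat v → v ++ [none] ∈ T → ls (v ++ [none]) = lp v
  level_ge : ∀ v ∈ T, 2 ≤ (if Even π then π else π - 1) - 2 * v.count none

/-- An FNHT is full if the root carries all states. -/
def FNHT.full {Q : Type} [Fintype Q] [DecidableEq Q] {π : ℕ} (t : FNHT Q π) : Prop :=
  t.ls [] = Finset.univ

/-- `v` is a leaf of the tree. -/
def FNHT.isLeaf {Q : Type} [Fintype Q] [DecidableEq Q] {π : ℕ} (t : FNHT Q π)
    (v : FNHTNode) : Prop := ∀ x, v ++ [x] ∉ t.T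


lemma fnht_step_or_nat (v : FNHTNode) : isStep v ∨ isNat v := by
  induction v using List.reverseRecOn with
  | nil => exact Or.inl (Or.inl rfl)
  | append_singleton w x _ =>
    cases x with
    | none => exact Or.inl (Or.inr ⟨w, rfl⟩)
    | some c => exact Or.inr ⟨w, c, rfl⟩

lemma fnht_child_subset {Q : Type} [Fintype Q] [DecidableEq Q] {π : ℕ} (t : FNHT Q π)
    (v : FNHTNode) (x : Option ℕ) (hv : v ∈ t.T) (hvx : v ++ [x] ∈ t.T) :
    t.ls (v ++ [x]) ⊆ t.ls v := by
  rcases fnht_step_or_nat v with hs | hn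
  · have hx : x ≠ none := t.step_children v hv x hs hvx
    obtain ⟨c, rfl⟩ : ∃ c : ℕ, x = some c := by
      cases x with
      | none => exact absurd rfl hx
      | some c => exact ⟨c, rfl⟩
    rw [t.step_union v hv hs]
    intro a ha
    refine Finset.mem_union_right _ (Finset.mem_biUnion.2 ⟨v ++ [some c], ?_, ha⟩)
    exact Finset.mem_filter.2 ⟨hvx, c, rfl⟩
  · have hx : x = none := t.nat_children v hv x hn hvx
    subst hx
    rw [t.nat_stepchild v hv hn hvx, (t.nat_union v hv hn).1]
    exact Finset.subset_union_left

lemma fnht_prefix_subset {Q : Type} [Fintype Q] [DecidableEq Q] {π : ℕ} (t : FNHT Q π) :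
    ∀ w ∈ t.T, ∀ v, v <+: w → t.ls w ⊆ t.ls v := by
  intro w
  induction w using List.reverseRecOn with
  | nil =>
    intro _ v hv
    rw [List.prefix_nil.1 hv]
  | append_singleton w' x ih =>
    intro hw v hv
    obtain ⟨u, hu⟩ := hv
    rcases u.eq_nil_or_concat with rfl | ⟨u', y, rfl⟩
    · simp at hu; rw [hu]
    · rw [List.concat_eq_append, ← List.append_assoc] at hu
      obtain ⟨h1, _⟩ := List.append_inj' hu.symm rfl
      have hw' : w' ∈ t.T := t.prefix_closed w' (w' ++ [x]) ⟨[x], rfl⟩ hw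
      exact (fnht_child_subset t w' x hw' hw).trans (ih hw' v ⟨u', h1.symm⟩)

lemma fnht_split {α : Type*} : ∀ (v w : List α), ¬ v <+: w → ¬ w <+: v →
    ∃ (p : List α) (a b : α) (v' w' : List α),
      a ≠ b ∧ v = p ++ a :: v' ∧ w = p ++ b :: w' := by
  intro v
  induction v with
  | nil => intro w h1 _; exact absurd (List.nil_prefix) h1
  | cons a v' ih =>
    intro w h1 h2
    cases w with
    | nil => exact absurd (List.nil_prefix) h2
    | cons b w' =>
      by_cases hab : a = b
      · subst hab
        have h1' : ¬ v' <+: w' := fun h => h1 (List.cons_prefix_cons.2 ⟨rfl, h⟩)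
        have h2' : ¬ w' <+: v' := fun h => h2 (List.cons_prefix_cons.2 ⟨rfl, h⟩)
        obtain ⟨p, a', b', v'', w'', hne, hv, hw⟩ := ih w' h1' h2'
        exact ⟨a :: p, a', b', v'', w'', hne, by simp [hv], by simp [hw]⟩
      · exact ⟨[], a, b, v', w', hab, rfl, rfl⟩

/-- In any FNHT, incomparable nodes carry disjoint state sets. -/
theorem fnht_incomparable_disjoint
    {Q : Type} [Fintype Q] [DecidableEq Q] {π : ℕ} (t : FNHT Q π)
    (v w : FNHTNode) (hv : v ∈ t.T) (hw : w ∈ t.T)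
    (hvw : ¬ v <+: w) (hwv : ¬ w <+: v) :
    Disjoint (t.ls v) (t.ls w) := by
  obtain ⟨p, a, b, v', w', hab, hveq, hweq⟩ := fnht_split v w hvw hwv
  subst hveq; subst hweq
  have hpa : p ++ [a] ∈ t.T :=
    t.prefix_closed _ _ ⟨v', by simp⟩ hv
  have hpb : p ++ [b] ∈ t.T :=
    t.prefix_closed _ _ ⟨w', by simp⟩ hw
  have hp : p ∈ t.T := t.prefix_closed _ _ ⟨[a], rfl⟩ hpa
  have hsubv : t.ls (p ++ a :: v') ⊆ t.ls (p ++ [a]) :=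
    fnht_prefix_subset t _ hv _ ⟨v', by simp⟩
  have hsubw : t.ls (p ++ b :: w') ⊆ t.ls (p ++ [b]) :=
    fnht_prefix_subset t _ hw _ ⟨w', by simp⟩
  rcases fnht_step_or_nat p with hs | hn
  · obtain ⟨c, rfl⟩ : ∃ c : ℕ, a = some c := by
      have := t.step_children p hp a hs hpa
      cases a with
      | none => exact absurd rfl this
      | some c => exact ⟨c, rfl⟩
    obtain ⟨c', rfl⟩ : ∃ c' : ℕ, b = some c' := by
      have := t.step_children p hp b hs hpb
      cases b with
      | none => exact absurd rfl this
      | some c' => exact ⟨c', rfl⟩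
    have hcc : c ≠ c' := fun h => hab (by rw [h])
    exact (t.step_disj_children p hp hs c c' hcc hpa hpb).mono hsubv hsubw
  · have ha := t.nat_children p hp a hn hpa
    have hb := t.nat_children p hp b hn hpb
    exact absurd (ha.trans hb.symm) hab
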